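/- arXiv:2512.20737 — 6 statements merged into one kernel-verified Lean document; each statement's English description precedes it below -/
import Mathlib

section
/- The polynomial ψ satisfies ∫₀¹ ψ(x) p(x) dx = 0 for every polynomial p of degree at most k with p(0) = p(1) = 0. -/
/-!
Write `p = x(1-x)q` with `deg q ≤ k - 2`, so that `k! ψ p = q · D^{k-1}[x^{k+1}(1-x)^k]`.
The polynomial `x^{k+1}(1-x)^k` has roots of order at least `k - 1` at `0` and `1`, so integrating
by parts `k - 1` times produces no boundary terms and moves all derivatives onto `q`, which they
annihilate.
-/

open Polynomial intervalIntegral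

namespace Polynomial

theorem isRoot_iterate_derivative_of_pow_dvd {R : Type*} [CommRing R] {g : R[X]} {a : R}
    {n j : ℕ} (h : (X - C a) ^ n ∣ g) (hj : j < n) : (derivative^[j] g).IsRoot a :=
  dvd_iff_isRoot.mp <| (dvd_pow_self _ (Nat.sub_ne_zero_of_lt hj)).trans
    (pow_sub_dvd_iterate_derivative_of_pow_dvd j h)

theorem X_mul_one_sub_X_dvd {R : Type*} [CommRing R] {p : R[X]} (h0 : p.IsRoot 0)
    (h1 : p.IsRoot 1) : X * (1 - X) ∣ p := by
  have hcop : IsCoprime (X - C 0 : R[X]) (X - C 1) :=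
    isCoprime_X_sub_C_of_isUnit_sub (by simp)
  have hdvd := hcop.mul_dvd (dvd_iff_isRoot.mpr h0) (dvd_iff_isRoot.mpr h1)
  rw [show (X : R[X]) * (1 - X) = -((X - C 0) * (X - C 1)) by simp; ring]
  exact neg_dvd.mpr hdvd

theorem natDegree_X_mul_one_sub_X_mul {R : Type*} [CommRing R] [IsDomain R] {q : R[X]}
    (hq : q ≠ 0) : (X * (1 - X) * q).natDegree = q.natDegree + 2 := by
  have h : (1 - X : R[X]).natDegree = 1 := by
    rw [natDegree_sub_eq_right_of_natDegree_lt] <;> simp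
  have h2 : (X * (1 - X) : R[X]).natDegree = 2 := by
    rw [natDegree_mul X_ne_zero (ne_zero_of_natDegree_gt (n := 0) (by omega)), natDegree_X, h]
  rw [natDegree_mul (ne_zero_of_natDegree_gt (n := 0) (by omega)) hq, h2, add_comm]

variable {a b : ℝ}

theorem integral_eval_derivative_mul {g : ℝ[X]} (ha : g.IsRoot a) (hb : g.IsRoot b)
    (q : ℝ[X]) :
    ∫ x in a..b, (derivative g).eval x * q.eval x
      = -∫ x in a..b, g.eval x * (derivative q).eval x := by
  have h := integral_mul_deriv_eq_deriv_mul (fun x _ ↦ g.hasDerivAt x) (fun x _ ↦ q.hasDerivAt x)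
    ((derivative g).continuous.intervalIntegrable a b)
    ((derivative q).continuous.intervalIntegrable a b)
  rw [ha.eq_zero, hb.eq_zero] at h
  linarith

theorem integral_eval_iterate_derivative_mul {g : ℝ[X]} {n : ℕ}
    (h : ∀ j < n, (derivative^[j] g).IsRoot a ∧ (derivative^[j] g).IsRoot b) (q : ℝ[X]) :
    ∫ x in a..b, (derivative^[n] g).eval x * q.eval x
      = (-1) ^ n * ∫ x in a..b, g.eval x * (derivative^[n] q).eval x := by
  induction n generalizing q with
  | zero => simp
  | succ n ih =>
    obtain ⟨ha, hb⟩ := h n n.lt_succ_self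
    rw [Function.iterate_succ_apply', integral_eval_derivative_mul ha hb,
      ih (fun j hj ↦ h j (hj.trans n.lt_succ_self)), Function.iterate_succ_apply]
    ring

end Polynomial

theorem stmt_1_general (k : ℕ) (ψ : Polynomial ℝ)
    (hψ : (C (k.factorial : ℝ)) * (X * (1 - X)) * ψ =
        Polynomial.derivative^[k - 1] (X ^ (k + 1) * (1 - X) ^ k)) :
    ∀ p : Polynomial ℝ, p.degree ≤ (k : WithBot ℕ) → p.eval 0 = 0 → p.eval 1 = 0 →
      ∫ x in (0:ℝ)..1, ψ.eval x * p.eval x = 0 := by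
  intro p hp h0 h1
  obtain ⟨q, rfl⟩ := X_mul_one_sub_X_dvd h0 h1
  set f : ℝ[X] := X ^ (k + 1) * (1 - X) ^ k
  have hq : derivative^[k - 1] q = 0 := by
    rcases eq_or_ne q 0 with rfl | hq0
    · simp
    · apply iterate_derivative_eq_zero
      have := natDegree_le_of_degree_le hp
      rw [natDegree_X_mul_one_sub_X_mul hq0] at this
      omega
  have hroots : ∀ j < k - 1, (derivative^[j] f).IsRoot 0 ∧ (derivative^[j] f).IsRoot 1 := by
    refine fun j hj ↦ ⟨isRoot_iterate_derivative_of_pow_dvd ?_ hj,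
      isRoot_iterate_derivative_of_pow_dvd ?_ hj⟩
    · exact dvd_mul_of_dvd_left
        (by simpa using pow_dvd_pow (X : ℝ[X]) (by omega : k - 1 ≤ k + 1)) _
    · exact ((pow_dvd_pow_of_dvd ⟨-1, by simp⟩ _).trans
        (pow_dvd_pow _ (Nat.sub_le k 1))).mul_left _
  have hpt : ∀ x : ℝ, ψ.eval x * (X * (1 - X) * q).eval x
      = (k.factorial : ℝ)⁻¹ * ((derivative^[k - 1] f).eval x * q.eval x) := by
    intro x
    rw [← hψ]
    simp only [eval_mul, eval_C]
    field_simp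
  simp_rw [hpt, integral_const_mul, integral_eval_iterate_derivative_mul hroots, hq]
  simp only [eval_zero, mul_zero, integral_zero]

/-- ψ satisfies ∫₀¹ ψ(x) p(x) dx = 0 for every polynomial p of
degree at most k with p(0) = p(1) = 0, where ψ is the polynomial with
k!·x(1-x)·ψ(x) = d^{k-1}/dx^{k-1}[x^{k+1}(1-x)^k]. -/
theorem stmt_1 (k : ℕ) (hk : 1 ≤ k) (ψ : Polynomial ℝ)
    (hψ : (C (k.factorial : ℝ)) * (X * (1 - X)) * ψ =
        Polynomial.derivative^[k - 1] (X ^ (k + 1) * (1 - X) ^ k)) :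
    ∀ p : Polynomial ℝ, p.degree ≤ (k : WithBot ℕ) → p.eval 0 = 0 → p.eval 1 = 0 →
      ∫ x in (0:ℝ)..1, ψ.eval x * p.eval x = 0 :=
  stmt_1_general k ψ hψ
end

section
/- If k is odd, then ∫₀¹ ψ(x)² dx = 1/(k(k+2)). -/
/-!
For the pairing `⟨p, q⟩ = ∫₀¹ p q`, evaluation at `0` on polynomials of degree `≤ k` is
represented by `v = -(1/k!) D^(k+1) [x^k (1-x)^(k+1)]`, which has `v(0) = (k+1)²` and
`v(1) = (-1)^k (k+1)`; the reflection `v(1 - x)` represents evaluation at `1`. Orthogonality of `ψ`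
to the polynomials vanishing at both ends gives `⟨ψ, p⟩ = p(0) B + p(1) A` with `A = ⟨ψ, x⟩`,
`B = ⟨ψ, 1 - x⟩`.
Taking `p = ψ` gives `∫ ψ² = A`, and taking for `p` the two representers gives
`(k+1)² B + (-1)^k (k+1) A = ψ(0) = 0` and `(-1)^k (k+1) B + (k+1)² A = ψ(1) = 1`,
whose solution for odd `k` is `A = 1/(k(k+2))`.
-/

open Polynomial intervalIntegral

open scoped Nat

namespace Polynomial

variable {R : Type*}

theorem iterate_derivative_eval_zero [Semiring R] (p : R[X]) (m : ℕ) :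
    (derivative^[m] p).eval 0 = m ! * p.coeff m := by
  rw [← coeff_zero_eq_eval_zero, coeff_iterate_derivative, zero_add, Nat.descFactorial_self,
    nsmul_eq_mul]

theorem iterate_derivative_eval_one [CommRing R] (p : R[X]) (m : ℕ) :
    (derivative^[m] p).eval 1 = (-1) ^ m * m ! * (p.comp (1 - X)).coeff m := by
  have h := congrArg (eval 0) (iterate_derivative_comp_one_sub_X p m)
  rw [iterate_derivative_eval_zero] at h
  simp only [eval_mul, eval_pow, eval_neg, eval_one, eval_comp, eval_sub, eval_X, sub_zero] at h
  rw [mul_assoc, h, ← mul_assoc, ← mul_pow, neg_one_mul, neg_neg, one_pow, one_mul]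

theorem coeff_one_sub_X_pow [CommRing R] (n m : ℕ) :
    ((1 - X : R[X]) ^ n).coeff m = (-1) ^ m * n.choose m := by
  induction n generalizing m with
  | zero => cases m <;> simp [coeff_one]
  | succ n ih =>
    cases m with
    | zero => simp [coeff_zero_eq_eval_zero]
    | succ m =>
      rw [pow_succ', sub_mul, one_mul, coeff_sub, coeff_X_mul, ih, ih, Nat.choose_succ_succ']
      push_cast
      ring

theorem natDegree_one_sub_X [Ring R] [Nontrivial R] : (1 - X : R[X]).natDegree = 1 := by
  rw [← neg_sub, natDegree_neg, ← C_1, natDegree_X_sub_C]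

theorem natDegree_comp_one_sub_X [CommRing R] [IsDomain R] (p : R[X]) :
    (p.comp (1 - X)).natDegree = p.natDegree := by
  rw [natDegree_comp, natDegree_one_sub_X, mul_one]

theorem X_pow_mul_one_sub_X_pow_comp_one_sub_X [CommRing R] (a b : ℕ) :
    (X ^ a * (1 - X : R[X]) ^ b).comp (1 - X) = X ^ b * (1 - X) ^ a := by
  simp only [mul_comp, pow_comp, X_comp, sub_comp, one_comp, sub_sub_cancel]
  ring

theorem iterate_derivative_X_pow_mul_one_sub_X_pow_eval_one [CommRing R] (a : ℕ) {b l : ℕ}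
    (hl : l < b) : (derivative^[l] (X ^ a * (1 - X : R[X]) ^ b)).eval 1 = 0 := by
  rw [iterate_derivative_eval_one, X_pow_mul_one_sub_X_pow_comp_one_sub_X, coeff_X_pow_mul',
    if_neg (by omega), mul_zero]

theorem integral_eval_derivative (p : ℝ[X]) (a b : ℝ) :
    ∫ x in a..b, (derivative p).eval x = p.eval b - p.eval a :=
  integral_eq_sub_of_hasDerivAt (fun x _ => p.hasDerivAt x)
    (p.derivative.continuous.intervalIntegrable _ _)

theorem integral_eval_mul_eval_comp_one_sub_X (p q : ℝ[X]) :
    ∫ x in (0:ℝ)..1, p.eval x * (q.comp (1 - X)).eval x =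
      ∫ x in (0:ℝ)..1, (p.comp (1 - X)).eval x * q.eval x := by
  have h := integral_comp_sub_left (a := 0) (b := 1)
    (fun x => (p.comp (1 - X)).eval x * q.eval x) (1 : ℝ)
  simp only [eval_comp, eval_sub, eval_one, eval_X, sub_sub_cancel, sub_zero, sub_self] at h ⊢
  exact h

/-- Repeated integration by parts; the boundary terms at `0` vanish because of the factor
`x ^ j`. -/
theorem integral_pow_mul_iterate_derivative {f : ℝ[X]} {m : ℕ}
    (hf : ∀ l ≤ m, (derivative^[l] f).eval 1 = 0) {j : ℕ} (hj : j ≤ m) :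
    ∫ x in (0:ℝ)..1, x ^ j * (derivative^[m + 1] f).eval x =
      (-1) ^ (j + 1) * j ! * (derivative^[m - j] f).eval 0 := by
  induction j generalizing m with
  | zero =>
    simp only [pow_zero, one_mul, Function.iterate_succ_apply', integral_eval_derivative,
      hf m le_rfl, Nat.sub_zero]
    simp
  | succ j ih =>
    obtain ⟨n, rfl⟩ : ∃ n, m = n + 1 := ⟨m - 1, by omega⟩
    have ibp := integral_mul_deriv_eq_deriv_mul (a := 0) (b := 1)
      (fun x _ => hasDerivAt_pow (j + 1) x)
      (fun x _ => (derivative^[n + 1] f).hasDerivAt x)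
      ((continuous_const.mul (continuous_pow j)).intervalIntegrable _ _)
      ((derivative (derivative^[n + 1] f)).continuous.intervalIntegrable _ _)
    rw [Function.iterate_succ_apply' derivative (n + 1), ibp, hf (n + 1) le_rfl]
    simp only [Nat.add_sub_cancel, mul_assoc, integral_const_mul]
    rw [ih (fun l hl => hf l (by omega)) (by omega), Nat.add_sub_add_right]
    push_cast [Nat.factorial_succ]
    ring

end Polynomial

/-- The factor `X ^ k * (1 - X) ^ (k + 1)` is chosen so that in
`integral_pow_mul_iterate_derivative` only the boundary term of the moment `j = 0` survives. -/
noncomputable def evalZeroKernel (k : ℕ) : ℝ[X] :=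
  C (-(k ! : ℝ)⁻¹) * derivative^[k + 1] (X ^ k * (1 - X) ^ (k + 1))

section evalZeroKernel

variable {k : ℕ}

theorem natDegree_evalZeroKernel_le : (evalZeroKernel k).natDegree ≤ k := by
  have hF : (X ^ k * (1 - X : ℝ[X]) ^ (k + 1)).natDegree ≤ 2 * k + 1 := by
    refine natDegree_mul_le.trans ?_
    have : ((1 - X : ℝ[X]) ^ (k + 1)).natDegree ≤ k + 1 := by
      simpa using natDegree_pow_le_of_le (k + 1) (natDegree_one_sub_X (R := ℝ)).le
    rw [natDegree_X_pow]
    omega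
  refine (natDegree_C_mul_le _ _).trans ?_
  have := natDegree_iterate_derivative (X ^ k * (1 - X : ℝ[X]) ^ (k + 1)) (k + 1)
  omega

theorem integral_pow_mul_evalZeroKernel {j : ℕ} (hj : j ≤ k) :
    ∫ x in (0:ℝ)..1, x ^ j * (evalZeroKernel k).eval x = if j = 0 then 1 else 0 := by
  simp only [evalZeroKernel, eval_mul, eval_C, mul_left_comm _ (-(k ! : ℝ)⁻¹)]
  rw [integral_const_mul, integral_pow_mul_iterate_derivative
    (fun l hl => iterate_derivative_X_pow_mul_one_sub_X_pow_eval_one k (Nat.lt_succ_of_le hl)) hj,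
    iterate_derivative_eval_zero, coeff_X_pow_mul']
  rcases Nat.eq_zero_or_pos j with rfl | hj0
  · simp [coeff_one_sub_X_pow, Nat.factorial_ne_zero]
  · rw [if_neg (by omega), if_neg (by omega)]
    simp

theorem integral_mul_evalZeroKernel {p : ℝ[X]} (hp : p.natDegree ≤ k) :
    ∫ x in (0:ℝ)..1, p.eval x * (evalZeroKernel k).eval x = p.eval 0 := by
  calc ∫ x in (0:ℝ)..1, p.eval x * (evalZeroKernel k).eval x
      = ∑ i ∈ Finset.range (k + 1),
          p.coeff i * ∫ x in (0:ℝ)..1, x ^ i * (evalZeroKernel k).eval x := by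
        simp only [eval_eq_sum_range' (Nat.lt_succ_of_le hp), Finset.sum_mul, mul_assoc]
        rw [integral_finsetSum fun i _ => Continuous.intervalIntegrable (by fun_prop) _ _]
        simp only [integral_const_mul]
    _ = p.coeff 0 := by
        rw [Finset.sum_congr rfl fun i hi => by
          rw [integral_pow_mul_evalZeroKernel (Finset.mem_range_succ_iff.mp hi)]]
        simp
    _ = p.eval 0 := coeff_zero_eq_eval_zero p

theorem integral_mul_evalZeroKernel_comp_one_sub_X {p : ℝ[X]} (hp : p.natDegree ≤ k) :
    ∫ x in (0:ℝ)..1, p.eval x * ((evalZeroKernel k).comp (1 - X)).eval x = p.eval 1 := by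
  rw [integral_eval_mul_eval_comp_one_sub_X,
    integral_mul_evalZeroKernel ((natDegree_comp_one_sub_X p).trans_le hp)]
  simp [eval_comp]

theorem evalZeroKernel_eval_zero : (evalZeroKernel k).eval 0 = (k + 1) ^ 2 := by
  rw [evalZeroKernel, eval_mul, eval_C, iterate_derivative_eval_zero, coeff_X_pow_mul',
    if_pos (by omega), Nat.add_sub_cancel_left, coeff_one_sub_X_pow, Nat.choose_one_right,
    Nat.factorial_succ]
  push_cast
  field_simp

theorem evalZeroKernel_eval_one : (evalZeroKernel k).eval 1 = (-1) ^ k * (k + 1) := by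
  rw [evalZeroKernel, eval_mul, eval_C, iterate_derivative_eval_one,
    X_pow_mul_one_sub_X_pow_comp_one_sub_X, coeff_X_pow_mul', if_pos le_rfl, Nat.sub_self,
    coeff_zero_eq_eval_zero, Nat.factorial_succ]
  push_cast
  field_simp
  simp [pow_succ]

end evalZeroKernel

/-- `p` minus its linear interpolant `p(0) (1 - x) + p(1) x` is one of the test polynomials. -/
theorem integral_eval_mul_eq_of_orthogonal {k : ℕ} (hk : 1 ≤ k) {ψ : ℝ[X]}
    (horth : ∀ p : ℝ[X], p.degree ≤ k → p.eval 0 = 0 → p.eval 1 = 0 →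
      ∫ x in (0:ℝ)..1, ψ.eval x * p.eval x = 0)
    {p : ℝ[X]} (hp : p.natDegree ≤ k) :
    ∫ x in (0:ℝ)..1, ψ.eval x * p.eval x =
      p.eval 0 * (∫ x in (0:ℝ)..1, ψ.eval x * (1 - x)) +
        p.eval 1 * ∫ x in (0:ℝ)..1, ψ.eval x * x := by
  set w := p - C (p.eval 0) * (1 - X) - C (p.eval 1) * X
  have hw : w.degree ≤ k := by
    rw [← natDegree_le_iff_degree_le]
    refine (natDegree_sub_le _ _).trans
      (max_le ((natDegree_sub_le _ _).trans (max_le hp ?_)) ?_)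
    · exact (natDegree_C_mul_le _ _).trans (natDegree_one_sub_X (R := ℝ) ▸ hk)
    · exact (natDegree_C_mul_le _ _).trans (natDegree_X_le.trans hk)
  have hw_eval : ∀ x, ψ.eval x * w.eval x = ψ.eval x * p.eval x -
      (p.eval 0 * (ψ.eval x * (1 - x)) + p.eval 1 * (ψ.eval x * x)) := by
    intro x
    simp only [w, eval_sub, eval_mul, eval_C, eval_one, eval_X]
    ring
  have h := horth w hw (by simp [w]) (by simp [w])
  simp_rw [hw_eval] at h
  rw [integral_sub (Continuous.intervalIntegrable (by fun_prop) _ _)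
      (Continuous.intervalIntegrable (by fun_prop) _ _),
    integral_add (Continuous.intervalIntegrable (by fun_prop) _ _)
      (Continuous.intervalIntegrable (by fun_prop) _ _),
    integral_const_mul, integral_const_mul] at h
  exact sub_eq_zero.mp h

/-- If k is odd, then ∫₀¹ ψ(x)² dx = 1/(k(k+2)), where ψ is the
degree-k polynomial with ψ(0)=0, ψ(1)=1 that is L²(0,1)-orthogonal to all
polynomials of degree ≤ k vanishing at both endpoints. -/
theorem stmt_2 (k : ℕ) (hk : Odd k) (ψ : Polynomial ℝ)
    (hdeg : ψ.degree = (k : WithBot ℕ)) (h0 : ψ.eval 0 = 0) (h1 : ψ.eval 1 = 1)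
    (horth : ∀ p : Polynomial ℝ, p.degree ≤ (k : WithBot ℕ) → p.eval 0 = 0 → p.eval 1 = 0 →
      ∫ x in (0:ℝ)..1, ψ.eval x * p.eval x = 0) :
    ∫ x in (0:ℝ)..1, (ψ.eval x) ^ 2 = 1 / ((k : ℝ) * (k + 2)) := by
  have hψ : ψ.natDegree ≤ k := (natDegree_eq_of_degree_eq_some hdeg).le
  have hsplit := fun (p : ℝ[X]) (hp : p.natDegree ≤ k) =>
    integral_eval_mul_eq_of_orthogonal hk.pos horth hp
  set A := ∫ x in (0:ℝ)..1, ψ.eval x * x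
  set B := ∫ x in (0:ℝ)..1, ψ.eval x * (1 - x)
  have hsq : ∫ x in (0:ℝ)..1, (ψ.eval x) ^ 2 = A := by
    simp_rw [sq, hsplit ψ hψ, h0, h1]
    ring
  set v := evalZeroKernel k
  have hv : v.natDegree ≤ k := natDegree_evalZeroKernel_le
  have hv0 : v.eval 0 = (k + 1) ^ 2 := evalZeroKernel_eval_zero
  have hv1 : v.eval 1 = -(k + 1) := by
    rw [evalZeroKernel_eval_one, hk.neg_one_pow, neg_one_mul]
  have e0 : ((k : ℝ) + 1) ^ 2 * B - (k + 1) * A = 0 := by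
    have h := hsplit v hv
    rw [integral_mul_evalZeroKernel hψ, h0, hv0, hv1] at h
    linear_combination -h
  have e1 : -((k : ℝ) + 1) * B + (k + 1) ^ 2 * A = 1 := by
    have h := hsplit (v.comp (1 - X)) ((natDegree_comp_one_sub_X v).trans_le hv)
    rw [integral_mul_evalZeroKernel_comp_one_sub_X hψ, h1] at h
    simp only [eval_comp, eval_sub, eval_one, eval_X, sub_zero, sub_self, hv0, hv1] at h
    linear_combination -h
  have hfactor : ((k : ℝ) + 1) * (A * (k * (k + 2)) - 1) = 0 := by
    linear_combination (k + 1) * e1 + e0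
  have hkpos : (0 : ℝ) < k := by exact_mod_cast hk.pos
  rw [hsq, eq_div_iff (by positivity)]
  linear_combination (mul_eq_zero.mp hfactor).resolve_left (by positivity)
end

section
/- If k is odd, then ∫₀¹ ψ(x) ψ(1-x) dx = 1/(k(k+1)(k+2)). -/
/-!
By orthogonality, for `deg h ≤ k` and `h 1 = 0` the integral `∫ ψ h` equals `h 0 · A` with
`A = ∫ ψ(x) (1 - x) dx`; for `h = ψ(1 - x)` this shows that the integral in question is `A`.
To compute `A`, take `h = F⁽ᵏ⁺¹⁾` for `F = xᵏ (1 - x)ᵏ (k + 1 - k x)`: it has degree `k`, vanishes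
at `1` and equals `-(k + 1)! k (k + 2)` at `0`. As every derivative of `F` of order `< k` vanishes
at `0` and `1`, integrating by parts `k + 1` times leaves only `ψ 1 · F⁽ᵏ⁾ 1 = (-1)ᵏ k!`.
Hence `A = (-1)ᵏ⁺¹ / (k (k + 1) (k + 2))`, and `k` is odd.
-/

open Polynomial intervalIntegral

section RootDerivatives

variable {R : Type*} [CommRing R]

theorem eval_iterate_derivative_X_sub_C_pow_mul_of_lt (a : R) (u : R[X]) {j n : ℕ} (h : j < n) :
    (derivative^[j] ((X - C a) ^ n * u)).eval a = 0 :=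
  dvd_iff_isRoot.mp <| (dvd_pow_self _ (Nat.sub_ne_zero_of_lt h)).trans <|
    pow_sub_dvd_iterate_derivative_of_pow_dvd j (dvd_mul_right _ _)

theorem eval_iterate_derivative_X_sub_C_pow_mul (a : R) (u : R[X]) (n j : ℕ) :
    (derivative^[n + j] ((X - C a) ^ n * u)).eval a =
      ((n + j).choose j * n.factorial : R) * (derivative^[j] u).eval a := by
  rw [iterate_derivative_mul, eval_finsetSum,
    Finset.sum_eq_single_of_mem j (Finset.mem_range.mpr (by omega))]
  · rw [show n + j - j = n by omega, iterate_derivative_X_sub_pow_self, eval_smul, eval_mul,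
      eval_natCast, nsmul_eq_mul]
    ring
  · intro i hi hij
    rw [Finset.mem_range] at hi
    rw [iterate_derivative_X_sub_pow, eval_smul, eval_mul, eval_smul, eval_pow, eval_sub, eval_X,
      eval_C, sub_self]
    rcases lt_or_gt_of_ne hij with hlt | hgt
    · rw [Nat.descFactorial_eq_zero_iff_lt.mpr (by omega)]
      simp
    · rw [zero_pow (by omega)]
      simp

end RootDerivatives

section IntegrationByParts

variable {a b : ℝ}

theorem integral_eval_mul_eval_derivative (p q : ℝ[X]) :
    ∫ x in a..b, p.eval x * (derivative q).eval x =
      p.eval b * q.eval b - p.eval a * q.eval a - ∫ x in a..b, (derivative p).eval x * q.eval x :=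
  integral_mul_deriv_eq_deriv_mul (fun x _ => p.hasDerivAt x) (fun x _ => q.hasDerivAt x)
    ((derivative p).continuous.intervalIntegrable a b)
    ((derivative q).continuous.intervalIntegrable a b)

theorem integral_eval_mul_eval_iterate_derivative (p q : ℝ[X]) (m : ℕ)
    (ha : ∀ j < m, (derivative^[j] q).eval a = 0) (hb : ∀ j < m, (derivative^[j] q).eval b = 0) :
    ∫ x in a..b, p.eval x * (derivative^[m] q).eval x =
      (-1) ^ m * ∫ x in a..b, (derivative^[m] p).eval x * q.eval x := by
  induction m generalizing p with
  | zero => simp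
  | succ m ih =>
    rw [Function.iterate_succ_apply', integral_eval_mul_eval_derivative,
      ha m m.lt_succ_self, hb m m.lt_succ_self,
      ih (derivative p) (fun j hj => ha j (hj.trans m.lt_succ_self))
        (fun j hj => hb j (hj.trans m.lt_succ_self)),
      ← Function.iterate_succ_apply]
    ring

theorem integral_eval_mul_eval_iterate_derivative_succ {ψ F : ℝ[X]} {k : ℕ}
    (hψ : ψ.natDegree ≤ k) (ha : ∀ j < k, (derivative^[j] F).eval a = 0)
    (hb : ∀ j < k, (derivative^[j] F).eval b = 0) :
    ∫ x in a..b, ψ.eval x * (derivative^[k + 1] F).eval x =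
      ψ.eval b * (derivative^[k] F).eval b - ψ.eval a * (derivative^[k] F).eval a := by
  rw [Function.iterate_succ_apply', integral_eval_mul_eval_derivative,
    integral_eval_mul_eval_iterate_derivative _ _ k ha hb, ← Function.iterate_succ_apply,
    iterate_derivative_eq_zero (p := ψ) (by omega)]
  simp

end IntegrationByParts

theorem integral_eval_mul_eq_eval_zero_mul {k : ℕ} (hk : 1 ≤ k) {ψ h : ℝ[X]}
    (horth : ∀ p : ℝ[X], p.degree ≤ (k : WithBot ℕ) → p.eval 0 = 0 → p.eval 1 = 0 →
      ∫ x in (0:ℝ)..1, ψ.eval x * p.eval x = 0)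
    (hdeg : h.natDegree ≤ k) (h1 : h.eval 1 = 0) :
    ∫ x in (0:ℝ)..1, ψ.eval x * h.eval x = h.eval 0 * ∫ x in (0:ℝ)..1, ψ.eval x * (1 - x) := by
  set p := h - C (h.eval 0) * (1 - X)
  have hp : p.degree ≤ k := degree_le_of_natDegree_le <|
    (natDegree_sub_le _ _).trans <| max_le hdeg <| le_trans (by compute_degree) hk
  rw [← integral_const_mul, ← sub_eq_zero,
    ← integral_sub (Continuous.intervalIntegrable (by fun_prop) _ _)
      (Continuous.intervalIntegrable (by fun_prop) _ _)]
  refine (integral_congr fun x _ => ?_).trans (horth p hp (by simp [p]) (by simp [p, h1]))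
  simp only [p, eval_sub, eval_mul, eval_C, eval_one, eval_X]
  ring

/-- `(k + 1) xᵏ (1 - x)ᵏ⁺¹ + xᵏ⁺¹ (1 - x)ᵏ`: the combination of the Rodrigues generator
`xᵏ⁺¹ (1 - x)ᵏ` and its reflection whose `(k + 1)`-st derivative vanishes at `1`. -/
noncomputable def rodriguesPoly (k : ℕ) : ℝ[X] :=
  X ^ k * (1 - X) ^ k * (C ((k : ℝ) + 1) - C (k : ℝ) * X)

namespace rodriguesPoly

variable (k : ℕ)

theorem eq_X_pow_mul :
    rodriguesPoly k = (X - C 0) ^ k * ((1 - X) ^ k * (C ((k : ℝ) + 1) - C (k : ℝ) * X)) := by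
  rw [rodriguesPoly, C_0, sub_zero, mul_assoc]

theorem eq_X_sub_one_pow_mul : rodriguesPoly k =
    (X - C 1) ^ k * (C ((-1) ^ k) * X ^ k * (C ((k : ℝ) + 1) - C (k : ℝ) * X)) := by
  rw [rodriguesPoly, show (1 - X : ℝ[X]) = C (-1) * (X - C 1) by simp, mul_pow, ← C_pow]
  ring

theorem natDegree_iterate_derivative_succ_le :
    (derivative^[k + 1] (rodriguesPoly k)).natDegree ≤ k := by
  refine (natDegree_iterate_derivative _ _).trans (Nat.sub_le_iff_le_add.mpr ?_)
  unfold rodriguesPoly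
  compute_degree
  omega

theorem eval_zero_iterate_derivative_of_lt {j : ℕ} (hj : j < k) :
    (derivative^[j] (rodriguesPoly k)).eval 0 = 0 := by
  rw [eq_X_pow_mul]
  exact eval_iterate_derivative_X_sub_C_pow_mul_of_lt _ _ hj

theorem eval_one_iterate_derivative_of_lt {j : ℕ} (hj : j < k) :
    (derivative^[j] (rodriguesPoly k)).eval 1 = 0 := by
  rw [eq_X_sub_one_pow_mul]
  exact eval_iterate_derivative_X_sub_C_pow_mul_of_lt _ _ hj

theorem eval_one_iterate_derivative :
    (derivative^[k] (rodriguesPoly k)).eval 1 = (-1) ^ k * k.factorial := by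
  have h := eval_iterate_derivative_X_sub_C_pow_mul (1 : ℝ)
    (C ((-1) ^ k) * X ^ k * (C ((k : ℝ) + 1) - C (k : ℝ) * X)) k 0
  simp only [add_zero, Nat.choose_zero_right, Function.iterate_zero_apply] at h
  rw [eq_X_sub_one_pow_mul, h]
  simp
  ring

theorem eval_one_iterate_derivative_succ :
    (derivative^[k + 1] (rodriguesPoly k)).eval 1 = 0 := by
  rw [eq_X_sub_one_pow_mul, eval_iterate_derivative_X_sub_C_pow_mul]
  simp only [Function.iterate_one, derivative_mul, derivative_C, derivative_X_pow, derivative_sub,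
    derivative_X]
  simp

theorem eval_zero_iterate_derivative_succ :
    (derivative^[k + 1] (rodriguesPoly k)).eval 0 = -((k + 1).factorial * k * (k + 2) : ℝ) := by
  rw [eq_X_pow_mul, eval_iterate_derivative_X_sub_C_pow_mul]
  simp only [Function.iterate_one, derivative_mul, derivative_C, derivative_sub, derivative_X,
    derivative_pow, derivative_one]
  simp [Nat.factorial_succ]
  ring

theorem integral_eval_mul_iterate_derivative_succ {ψ : ℝ[X]} (hψ : ψ.natDegree ≤ k)
    (h0 : ψ.eval 0 = 0) :
    ∫ x in (0:ℝ)..1, ψ.eval x * (derivative^[k + 1] (rodriguesPoly k)).eval x =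
      ψ.eval 1 * ((-1) ^ k * k.factorial) := by
  rw [integral_eval_mul_eval_iterate_derivative_succ hψ
    (fun _ => eval_zero_iterate_derivative_of_lt k) (fun _ => eval_one_iterate_derivative_of_lt k),
    eval_one_iterate_derivative, h0, zero_mul, sub_zero]

end rodriguesPoly

/-- If k is odd, then ∫₀¹ ψ(x) ψ(1-x) dx = 1/(k(k+1)(k+2)). -/
theorem stmt_3 (k : ℕ) (hk : Odd k) (ψ : Polynomial ℝ)
    (hdeg : ψ.degree = (k : WithBot ℕ)) (h0 : ψ.eval 0 = 0) (h1 : ψ.eval 1 = 1)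
    (horth : ∀ p : Polynomial ℝ, p.degree ≤ (k : WithBot ℕ) → p.eval 0 = 0 → p.eval 1 = 0 →
      ∫ x in (0:ℝ)..1, ψ.eval x * p.eval x = 0) :
    ∫ x in (0:ℝ)..1, ψ.eval x * ψ.eval (1 - x) = 1 / ((k : ℝ) * (k + 1) * (k + 2)) := by
  have hk1 : 1 ≤ k := hk.pos
  have hψ : ψ.natDegree ≤ k := natDegree_le_of_degree_le hdeg.le
  have hreflect : (ψ.comp (1 - X)).natDegree ≤ k :=
    natDegree_comp_le.trans <| (Nat.mul_le_mul hψ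
      (by compute_degree : (1 - X : ℝ[X]).natDegree ≤ 1)).trans_eq (mul_one k)
  have hsymm := integral_eval_mul_eq_eval_zero_mul hk1 horth hreflect (by simp [h0])
  simp only [eval_comp, eval_sub, eval_one, eval_X, sub_zero, h1, one_mul] at hsymm
  have htest := integral_eval_mul_eq_eval_zero_mul hk1 horth
    (rodriguesPoly.natDegree_iterate_derivative_succ_le k)
    (rodriguesPoly.eval_one_iterate_derivative_succ k)
  rw [rodriguesPoly.integral_eval_mul_iterate_derivative_succ k hψ h0,
    rodriguesPoly.eval_zero_iterate_derivative_succ, h1, hk.neg_one_pow,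
    Nat.factorial_succ] at htest
  push_cast at htest
  have hfac : (k.factorial : ℝ) ≠ 0 := by positivity
  rw [hsymm, eq_div_iff (by positivity)]
  apply mul_left_cancel₀ hfac
  linear_combination htest
end

section
/- If k is odd, then ∫₀¹ ψ(x) dx = 1/(k(k+1)). -/
open Polynomial intervalIntegral

/-!
The polynomial `ψ(x) + ψ(1 - x) - 1` has degree at most `k` and vanishes at `0` and `1`, so `ψ` is
orthogonal to it. Expanding this orthogonality gives `∫ ψ = ∫ ψ² + ∫ ψ(x) ψ(1 - x)`, and the two known
integrals add up to `1 / (k (k + 2)) + 1 / (k (k + 1) (k + 2)) = 1 / (k (k + 1))`.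
-/

namespace Polynomial

theorem degree_comp_one_sub_X_le {R : Type*} [CommRing R] {p : R[X]} {n : ℕ} (hp : p.degree ≤ n) :
    (p.comp (1 - X)).degree ≤ n := by
  refine degree_le_of_natDegree_le (natDegree_comp_le.trans ?_)
  have h : (1 - X : R[X]).natDegree ≤ 1 := (natDegree_sub_le _ _).trans (by simp [natDegree_X_le])
  simpa using Nat.mul_le_mul (natDegree_le_of_degree_le hp) h

theorem integral_eq_integral_sq_add_integral_mul_eval_one_sub {n : ℕ} {ψ : ℝ[X]}
    (hdeg : ψ.degree ≤ n) (h0 : ψ.eval 0 = 0) (h1 : ψ.eval 1 = 1)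
    (horth : ∀ p : ℝ[X], p.degree ≤ n → p.eval 0 = 0 → p.eval 1 = 0 →
      ∫ x in (0:ℝ)..1, ψ.eval x * p.eval x = 0) :
    ∫ x in (0:ℝ)..1, ψ.eval x =
      (∫ x in (0:ℝ)..1, ψ.eval x ^ 2) + ∫ x in (0:ℝ)..1, ψ.eval x * ψ.eval (1 - x) := by
  set p : ℝ[X] := ψ + ψ.comp (1 - X) - 1
  have hp_eval (x : ℝ) : p.eval x = ψ.eval x + ψ.eval (1 - x) - 1 := by simp [p]
  have hp_deg : p.degree ≤ n :=
    (degree_sub_le _ _).trans <| max_le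
      ((degree_add_le _ _).trans (max_le hdeg (degree_comp_one_sub_X_le hdeg)))
      (degree_one_le.trans (WithBot.coe_le_coe.mpr n.zero_le))
  have horth_p := horth p hp_deg (by simp [hp_eval, h0, h1]) (by simp [hp_eval, h0, h1])
  have hψ : Continuous fun x => ψ.eval x := ψ.continuous
  have hsq : IntervalIntegrable (fun x => ψ.eval x ^ 2) MeasureTheory.volume 0 1 :=
    (hψ.pow 2).intervalIntegrable 0 1
  have hrefl : IntervalIntegrable (fun x => ψ.eval x * ψ.eval (1 - x)) MeasureTheory.volume 0 1 :=
    (hψ.mul (hψ.comp (continuous_const.sub continuous_id))).intervalIntegrable 0 1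
  have hexpand : ∫ x in (0:ℝ)..1, ψ.eval x * p.eval x =
      (∫ x in (0:ℝ)..1, ψ.eval x ^ 2) + (∫ x in (0:ℝ)..1, ψ.eval x * ψ.eval (1 - x))
        - ∫ x in (0:ℝ)..1, ψ.eval x := by
    rw [← integral_add hsq hrefl, ← integral_sub (hsq.add hrefl) (hψ.intervalIntegrable 0 1)]
    exact integral_congr fun x _ => by simp only [hp_eval]; ring
  linarith

end Polynomial

theorem stmt_5_general (k : ℕ) (ψ : Polynomial ℝ)
    (hdeg : ψ.degree = (k : WithBot ℕ)) (h0 : ψ.eval 0 = 0) (h1 : ψ.eval 1 = 1)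
    (horth : ∀ p : Polynomial ℝ, p.degree ≤ (k : WithBot ℕ) → p.eval 0 = 0 → p.eval 1 = 0 →
      ∫ x in (0:ℝ)..1, ψ.eval x * p.eval x = 0)
    (hsq : ∫ x in (0:ℝ)..1, (ψ.eval x) ^ 2 = 1 / ((k : ℝ) * (k + 2)))
    (hrefl : ∫ x in (0:ℝ)..1, ψ.eval x * ψ.eval (1 - x) = 1 / ((k : ℝ) * (k + 1) * (k + 2))) :
    ∫ x in (0:ℝ)..1, ψ.eval x = 1 / ((k : ℝ) * (k + 1)) := by
  rw [integral_eq_integral_sq_add_integral_mul_eval_one_sub hdeg.le h0 h1 horth, hsq, hrefl]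
  rcases k.eq_zero_or_pos with rfl | hk
  · simp -- both sides are junk `1 / 0 = 0`
  · field_simp
    ring

/-- If k is odd, then ∫₀¹ ψ(x) dx = 1/(k(k+1)), given the known
identities ∫₀¹ ψ² = 1/(k(k+2)) and ∫₀¹ ψ(x)ψ(1-x) dx = 1/(k(k+1)(k+2)). -/
theorem stmt_5 (k : ℕ) (hk : Odd k) (ψ : Polynomial ℝ)
    (hdeg : ψ.degree = (k : WithBot ℕ)) (h0 : ψ.eval 0 = 0) (h1 : ψ.eval 1 = 1)
    (horth : ∀ p : Polynomial ℝ, p.degree ≤ (k : WithBot ℕ) → p.eval 0 = 0 → p.eval 1 = 0 →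
      ∫ x in (0:ℝ)..1, ψ.eval x * p.eval x = 0)
    (hsq : ∫ x in (0:ℝ)..1, (ψ.eval x) ^ 2 = 1 / ((k : ℝ) * (k + 2)))
    (hrefl : ∫ x in (0:ℝ)..1, ψ.eval x * ψ.eval (1 - x) = 1 / ((k : ℝ) * (k + 1) * (k + 2))) :
    ∫ x in (0:ℝ)..1, ψ.eval x = 1 / ((k : ℝ) * (k + 1)) :=
  stmt_5_general k ψ hdeg h0 h1 horth hsq hrefl
end

section
/- If k is odd, then ∫₀¹ ψ'(x) ψ(1-x) dx = 1/(k+1). -/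
/-!
Substituting `x ↦ 1 - x` turns the integral into `∫₀¹ ψ(x) ψ'(1 - x) dx`. The polynomial
`ψ'(1 - x)` differs from its linear interpolant `ψ'(1) (1 - x) + ψ'(0) x` by a polynomial of degree
`< k` vanishing at `0` and `1`, to which `ψ` is orthogonal. Hence the integral is
`ψ'(1) ∫₀¹ (1 - x) ψ + ψ'(0) ∫₀¹ x ψ`, and the moments of `ψ` are the given ones up to reflection:
`((k² + 2k - 1) + (k + 1)²) / (2 k (k + 1) (k + 2)) = 1 / (k + 1)`.
-/

open Polynomial intervalIntegral

theorem integral_mul_comp_one_sub (f g : ℝ → ℝ) :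
    ∫ x in (0:ℝ)..1, f x * g (1 - x) = ∫ x in (0:ℝ)..1, f (1 - x) * g x := by
  simpa using (integral_comp_sub_left (a := (0:ℝ)) (b := 1) (fun x => f (1 - x) * g x) 1)

theorem integral_mul_eq_of_orthogonal {ψ q : ℝ[X]} {k : ℕ} (hk : 1 ≤ k)
    (horth : ∀ p : ℝ[X], p.degree ≤ k → p.eval 0 = 0 → p.eval 1 = 0 →
      ∫ x in (0:ℝ)..1, ψ.eval x * p.eval x = 0)
    (hq : q.degree ≤ k) :
    ∫ x in (0:ℝ)..1, ψ.eval x * q.eval x =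
      q.eval 0 * (∫ x in (0:ℝ)..1, (1 - x) * ψ.eval x) +
        q.eval 1 * ∫ x in (0:ℝ)..1, x * ψ.eval x := by
  set r : ℝ[X] := C (q.eval 0) * (1 - X) + C (q.eval 1) * X
  have hr : r.degree ≤ k := by
    refine (degree_le_of_natDegree_le ?_).trans (by exact_mod_cast hk)
    simp only [r]
    compute_degree
  have hψr : ∫ x in (0:ℝ)..1, ψ.eval x * (q - r).eval x = 0 :=
    horth _ ((degree_sub_le _ _).trans (max_le hq hr)) (by simp [r]) (by simp [r])
  have hsplit : ∀ x : ℝ, ψ.eval x * q.eval x = ψ.eval x * (q - r).eval x +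
      (q.eval 0 * ((1 - x) * ψ.eval x) + q.eval 1 * (x * ψ.eval x)) := by
    intro x
    simp only [r, eval_sub, eval_add, eval_mul, eval_C, eval_one, eval_X]
    ring
  simp_rw [hsplit]
  rw [integral_add, hψr, zero_add, integral_add, integral_const_mul, integral_const_mul] <;>
    exact (by fun_prop : Continuous _).intervalIntegrable _ _

theorem natDegree_derivative_comp_one_sub_X_le (ψ : ℝ[X]) :
    ((derivative ψ).comp (1 - X)).natDegree ≤ ψ.natDegree :=
  calc ((derivative ψ).comp (1 - X)).natDegree
      ≤ (derivative ψ).natDegree * (1 - X : ℝ[X]).natDegree := natDegree_comp_le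
    _ ≤ ψ.natDegree * 1 := by
      gcongr
      · exact natDegree_derivative_le ψ |>.trans (Nat.sub_le _ _)
      · compute_degree
    _ = ψ.natDegree := mul_one _

theorem stmt_8_general (k : ℕ) (hk : Odd k) (ψ : Polynomial ℝ)
    (hdeg : ψ.degree = (k : WithBot ℕ))
    (horth : ∀ p : Polynomial ℝ, p.degree ≤ (k : WithBot ℕ) → p.eval 0 = 0 → p.eval 1 = 0 →
      ∫ x in (0:ℝ)..1, ψ.eval x * p.eval x = 0)
    (hd0 : (Polynomial.derivative ψ).eval 0 = ((k : ℝ) + 1) / 2)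
    (hd1 : (Polynomial.derivative ψ).eval 1 = ((k : ℝ) ^ 2 + 2 * k - 1) / 2)
    (hi1 : ∫ x in (0:ℝ)..1, x * ψ.eval (1 - x) = 1 / ((k : ℝ) * (k + 1) * (k + 2)))
    (hi2 : ∫ x in (0:ℝ)..1, (1 - x) * ψ.eval (1 - x) = 1 / ((k : ℝ) * (k + 2))) :
    ∫ x in (0:ℝ)..1, (Polynomial.derivative ψ).eval x * ψ.eval (1 - x) = 1 / ((k : ℝ) + 1) := by
  set q : ℝ[X] := (derivative ψ).comp (1 - X)
  have hq : q.degree ≤ k := by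
    rw [← natDegree_eq_of_degree_eq_some hdeg]
    exact degree_le_natDegree.trans (by exact_mod_cast natDegree_derivative_comp_one_sub_X_le ψ)
  have hq0 : q.eval 0 = (derivative ψ).eval 1 := by simp [q]
  have hq1 : q.eval 1 = (derivative ψ).eval 0 := by simp [q]
  have hm1 : ∫ x in (0:ℝ)..1, (1 - x) * ψ.eval x = 1 / ((k : ℝ) * (k + 1) * (k + 2)) := by
    rw [← hi1]
    exact (integral_mul_comp_one_sub (fun x => x) (ψ.eval ·)).symm
  have hm2 : ∫ x in (0:ℝ)..1, x * ψ.eval x = 1 / ((k : ℝ) * (k + 2)) := by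
    rw [← hi2, integral_mul_comp_one_sub (1 - ·) (ψ.eval ·)]
    simp
  have hk0 : (k : ℝ) ≠ 0 := by exact_mod_cast hk.pos.ne'
  calc ∫ x in (0:ℝ)..1, (derivative ψ).eval x * ψ.eval (1 - x)
      = ∫ x in (0:ℝ)..1, ψ.eval x * q.eval x := by
        rw [integral_mul_comp_one_sub ((derivative ψ).eval ·) (ψ.eval ·)]
        simp [q, mul_comm]
    _ = 1 / ((k : ℝ) + 1) := by
        rw [integral_mul_eq_of_orthogonal hk.pos horth hq, hq0, hq1, hd0, hd1, hm1, hm2]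
        field_simp
        ring

/-- If k is odd, then ∫₀¹ ψ'(x) ψ(1-x) dx = 1/(k+1). -/
theorem stmt_8 (k : ℕ) (hk : Odd k) (ψ : Polynomial ℝ)
    (hdeg : ψ.degree = (k : WithBot ℕ)) (h0 : ψ.eval 0 = 0) (h1 : ψ.eval 1 = 1)
    (horth : ∀ p : Polynomial ℝ, p.degree ≤ (k : WithBot ℕ) → p.eval 0 = 0 → p.eval 1 = 0 →
      ∫ x in (0:ℝ)..1, ψ.eval x * p.eval x = 0)
    (hd0 : (Polynomial.derivative ψ).eval 0 = ((k : ℝ) + 1) / 2)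
    (hd1 : (Polynomial.derivative ψ).eval 1 = ((k : ℝ) ^ 2 + 2 * k - 1) / 2)
    (hi1 : ∫ x in (0:ℝ)..1, x * ψ.eval (1 - x) = 1 / ((k : ℝ) * (k + 1) * (k + 2)))
    (hi2 : ∫ x in (0:ℝ)..1, (1 - x) * ψ.eval (1 - x) = 1 / ((k : ℝ) * (k + 2))) :
    ∫ x in (0:ℝ)..1, (Polynomial.derivative ψ).eval x * ψ.eval (1 - x) = 1 / ((k : ℝ) + 1) :=
  stmt_8_general k hk ψ hdeg horth hd0 hd1 hi1 hi2
end

section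
/- Let w: [a,b] → ℝ be continuous. A continuous function v on [a,b] satisfies ∫_a^b w(x)v(x)p(x) dx = 0 for all polynomials p of degree ≤ m if and only if there exists f ∈ C^{m+1}(a,b) with w·v = f^{(m+1)} on [a,b] and f^{(j)}(a) = f^{(j)}(b) = 0 for j = 0, 1, …, m. -/
open Polynomial intervalIntegral

/-!
Write `g` for a continuous extension of `w * v` to `ℝ`. If `f^{(m+1)} = g` on `[a, b]` and the
derivatives of order `≤ m` of `f` vanish at both endpoints, then `m + 1` integrations by parts
move all derivatives onto `p`, and `p^{(m+1)} = 0`. Conversely, take for `f` the `(m+1)`-fold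
primitive of `g` based at `a`, so that the conditions at `a` hold automatically. If `P' = Q` and
`P(a) = 0`, integration by parts gives `∫ P x^n = (b^{n+1} P(b) - ∫ Q x^{n+1}) / (n + 1)`, and
`P(b) = ∫ Q`. Hence orthogonality of `Q` to polynomials of degree `≤ k + 1` gives `P(b) = 0` and
orthogonality of `P` to degree `≤ k`; iterating from `g` gives the conditions at `b`.
-/

noncomputable def iteratedPrimitive (g : ℝ → ℝ) (a : ℝ) : ℕ → ℝ → ℝ
  | 0 => g
  | k + 1 => fun x => ∫ t in a..x, iteratedPrimitive g a k t

section IteratedPrimitive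

variable {g : ℝ → ℝ} {a b : ℝ}

theorem iteratedPrimitive_succ_self (k : ℕ) : iteratedPrimitive g a (k + 1) a = 0 :=
  integral_same

theorem continuous_iteratedPrimitive (hg : Continuous g) :
    ∀ k, Continuous (iteratedPrimitive g a k)
  | 0 => hg
  | k + 1 => continuous_primitive
      (fun _ _ => (continuous_iteratedPrimitive hg k).intervalIntegrable _ _) a

theorem hasDerivAt_iteratedPrimitive_succ (hg : Continuous g) (k : ℕ) (x : ℝ) :
    HasDerivAt (iteratedPrimitive g a (k + 1)) (iteratedPrimitive g a k x) x :=
  ((continuous_iteratedPrimitive hg k).integral_hasStrictDerivAt a x).hasDerivAt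

theorem deriv_iteratedPrimitive_succ (hg : Continuous g) (k : ℕ) :
    deriv (iteratedPrimitive g a (k + 1)) = iteratedPrimitive g a k :=
  funext fun x => (hasDerivAt_iteratedPrimitive_succ hg k x).deriv

theorem contDiff_iteratedPrimitive (hg : Continuous g) :
    ∀ k : ℕ, ContDiff ℝ k (iteratedPrimitive g a k)
  | 0 => contDiff_zero.mpr hg
  | k + 1 => by
    rw [Nat.cast_succ, contDiff_succ_iff_deriv, deriv_iteratedPrimitive_succ hg]
    exact ⟨fun x => (hasDerivAt_iteratedPrimitive_succ hg k x).differentiableAt, by simp,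
      contDiff_iteratedPrimitive hg k⟩

theorem iteratedDeriv_iteratedPrimitive (hg : Continuous g) {j k : ℕ} (hjk : j ≤ k) :
    iteratedDeriv j (iteratedPrimitive g a k) = iteratedPrimitive g a (k - j) := by
  induction j generalizing k with
  | zero => simp
  | succ j ih =>
    obtain ⟨k, rfl⟩ := Nat.exists_eq_add_of_le' (Nat.one_le_of_lt hjk)
    rw [iteratedDeriv_succ', deriv_iteratedPrimitive_succ hg, ih (by omega)]
    congr 1
    omega

theorem integral_iteratedPrimitive_mul_pow_eq_zero (hg : Continuous g) {m : ℕ}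
    (h : ∀ n ≤ m, ∫ x in a..b, g x * x ^ n = 0) {k n : ℕ} (hkn : k + n ≤ m) :
    ∫ x in a..b, iteratedPrimitive g a k x * x ^ n = 0 := by
  induction k generalizing n with
  | zero => simpa [iteratedPrimitive] using h n (by omega)
  | succ k ih =>
    have hb : iteratedPrimitive g a (k + 1) b = 0 := by
      simpa [iteratedPrimitive] using ih (n := 0) (by omega)
    have parts := integral_mul_deriv_eq_deriv_mul (v := fun x => x ^ (n + 1))
      (v' := fun x => ((n : ℝ) + 1) * x ^ n)
      (fun x _ => hasDerivAt_iteratedPrimitive_succ (a := a) hg k x)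
      (fun x _ => by simpa using hasDerivAt_pow (n + 1) x)
      ((continuous_iteratedPrimitive hg k).intervalIntegrable a b)
      ((continuous_const.mul (continuous_pow n)).intervalIntegrable a b)
    rw [iteratedPrimitive_succ_self, hb, ih (by omega)] at parts
    simp only [mul_left_comm _ ((n : ℝ) + 1), integral_const_mul, zero_mul, sub_zero] at parts
    exact (mul_eq_zero.mp parts).resolve_left (by positivity)

theorem iteratedPrimitive_succ_eq_zero_right (hg : Continuous g) {m : ℕ}
    (h : ∀ n ≤ m, ∫ x in a..b, g x * x ^ n = 0) {k : ℕ} (hk : k ≤ m) :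
    iteratedPrimitive g a (k + 1) b = 0 := by
  simpa [iteratedPrimitive] using integral_iteratedPrimitive_mul_pow_eq_zero hg h (n := 0) hk

end IteratedPrimitive

section IntegrationByParts

variable {a b : ℝ}

theorem integral_deriv_mul_eval_of_eq_zero {f : ℝ → ℝ} (hf : ContDiff ℝ 1 f) (ha : f a = 0)
    (hb : f b = 0) (q : ℝ[X]) :
    ∫ x in a..b, deriv f x * q.eval x = -∫ x in a..b, f x * (derivative q).eval x := by
  have parts := integral_mul_deriv_eq_deriv_mul
    (fun x _ => (hf.differentiable one_ne_zero x).hasDerivAt) (fun x _ => q.hasDerivAt x)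
    ((hf.continuous_deriv le_rfl).intervalIntegrable a b)
    ((derivative q).continuous.intervalIntegrable a b)
  rw [ha, hb] at parts
  linarith

theorem integral_iteratedDeriv_mul_eval {n : ℕ} {f : ℝ → ℝ} (hf : ContDiff ℝ n f)
    (hf₀ : ∀ j < n, iteratedDeriv j f a = 0 ∧ iteratedDeriv j f b = 0) (p : ℝ[X]) :
    ∫ x in a..b, iteratedDeriv n f x * p.eval x =
      (-1) ^ n * ∫ x in a..b, f x * (derivative^[n] p).eval x := by
  induction n generalizing f with
  | zero => simp
  | succ n ih =>
    rw [Nat.cast_succ] at hf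
    have hf' (j : ℕ) (hj : j < n) :
        iteratedDeriv j (deriv f) a = 0 ∧ iteratedDeriv j (deriv f) b = 0 := by
      simpa only [iteratedDeriv_succ'] using hf₀ (j + 1) (by omega)
    rw [iteratedDeriv_succ', ih hf.deriv' hf', integral_deriv_mul_eval_of_eq_zero
      (hf.of_le (by simp)) (hf₀ 0 (by omega)).1 (hf₀ 0 (by omega)).2,
      Function.iterate_succ_apply']
    ring

end IntegrationByParts

theorem ContinuousOn.exists_continuous_eqOn_Icc {α β : Type*} [LinearOrder α]
    [TopologicalSpace α] [OrderTopology α] [TopologicalSpace β] {a b : α} {f : α → β}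
    (hab : a ≤ b) (hf : ContinuousOn f (Set.Icc a b)) :
    ∃ g : α → β, Continuous g ∧ Set.EqOn g f (Set.Icc a b) :=
  ⟨Set.IccExtend hab (Set.domRestrict _ f), hf.domRestrict.Icc_extend',
    fun _ hx => Set.IccExtend_of_mem hab _ hx⟩

/-- Powell, Th. 12.5: Let w be continuous on [a,b]. A continuous
function v on [a,b] satisfies ∫_a^b w v p = 0 for all polynomials p of degree ≤ m
iff there exists f ∈ C^{m+1} with w·v = f^{(m+1)} on [a,b] and
f^{(j)}(a) = f^{(j)}(b) = 0 for j = 0,…,m. -/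
theorem stmt_11 (a b : ℝ) (hab : a < b) (m : ℕ) (w v : ℝ → ℝ)
    (hw : ContinuousOn w (Set.Icc a b)) (hv : ContinuousOn v (Set.Icc a b)) :
    (∀ p : Polynomial ℝ, p.degree ≤ (m : WithBot ℕ) →
        ∫ x in a..b, w x * v x * p.eval x = 0) ↔
    (∃ f : ℝ → ℝ, ContDiff ℝ (m + 1 : ℕ) f ∧
        (∀ x ∈ Set.Icc a b, iteratedDeriv (m + 1) f x = w x * v x) ∧
        (∀ j : ℕ, j ≤ m → iteratedDeriv j f a = 0 ∧ iteratedDeriv j f b = 0)) := by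
  have integral_congr_wv {h : ℝ → ℝ} (hh : Set.EqOn h (w * v) (Set.Icc a b))
      (q : ℝ → ℝ) : ∫ x in a..b, h x * q x = ∫ x in a..b, w x * v x * q x :=
    integral_congr fun x hx => by
      rw [Set.uIcc_of_le hab.le] at hx
      simp [hh hx]
  constructor
  · intro h
    obtain ⟨g, hg, hgwv⟩ := (hw.mul hv).exists_continuous_eqOn_Icc hab.le
    have hg₀ (n : ℕ) (hn : n ≤ m) : ∫ x in a..b, g x * x ^ n = 0 := by
      simpa [integral_congr_wv hgwv] using h (X ^ n) (by simpa using hn)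
    refine ⟨iteratedPrimitive g a (m + 1), contDiff_iteratedPrimitive hg _, fun x hx => ?_,
      fun j hj => ?_⟩
    · rw [iteratedDeriv_iteratedPrimitive hg le_rfl, Nat.sub_self]
      exact hgwv hx
    · rw [iteratedDeriv_iteratedPrimitive hg (by omega), show m + 1 - j = m - j + 1 by omega]
      exact ⟨iteratedPrimitive_succ_self _,
        iteratedPrimitive_succ_eq_zero_right hg hg₀ (Nat.sub_le m j)⟩
  · rintro ⟨f, hf, hfwv, hf₀⟩ p hp
    rw [← integral_congr_wv hfwv,
      integral_iteratedDeriv_mul_eval hf (fun j hj => hf₀ j (by omega)),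
      iterate_derivative_eq_zero_of_degree_lt (hp.trans_lt (by exact_mod_cast m.lt_succ_self))]
    simp
end
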